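/- For every m ≥ 1, if a nonempty palindrome w is a prefix of E_{1,m}, then w = E_{1,n} for some n with 1 ≤ n ≤ m; likewise, if a nonempty palindrome w is a suffix of E_{1,m}, then w = E_{1,n} for some n with 1 ≤ n ≤ m. -/
import Mathlib


/-- The alphabet: letters a, b (for the period-doubling sequence) and c (used by Θ₂). -/
inductive Letter : Type
  | a | b | c
deriving DecidableEq, Repr

open Letter

/-- The period-doubling substitution σ : a ↦ ab, b ↦ aa, extended to words
(the extra letter c is left untouched; it is never produced). -/
def sigmaw : List Letter → List Letter :=
  fun w => w.flatMap fun x => match x with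
    | .a => [.a, .b]
    | .b => [.a, .a]
    | .c => [.c]

/-- A_m = σ^m(a). -/
def A (m : ℕ) : List Letter := sigmaw^[m] [.a]

/-- B_m = σ^m(b). -/
def B (m : ℕ) : List Letter := sigmaw^[m] [.b]

/-- δ_m, the last letter of A_m. -/
def delta (m : ℕ) : Letter := (A m).getLastD .a

/-- The period-doubling sequence D, as a function giving its (n+1)-st letter
(0-indexed); it is the fixed point of σ beginning with a, and A_{n+1} is a
prefix of it of length 2^{n+1} > n. -/
def D (n : ℕ) : Letter := (A (n + 1)).getD n .a

/-- The finite segment D[i .. i+len−1] of the period-doubling sequence,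
with 1-based starting position i. -/
def Dseg (i len : ℕ) : List Letter := (List.range len).map fun k => D (i - 1 + k)

/-- u occurs in the finite word w at (1-based) position i. -/
def OccursAt {α : Type*} (u w : List α) (i : ℕ) : Prop :=
  1 ≤ i ∧ i - 1 + u.length ≤ w.length ∧ (w.drop (i - 1)).take u.length = u

/-- u is a factor of the finite word w. -/
def IsFactor {α : Type*} (u w : List α) : Prop := ∃ i, OccursAt u w i

/-- u occurs in the period-doubling sequence D at (1-based) position i. -/
def DOccursAt (u : List Letter) (i : ℕ) : Prop := 1 ≤ i ∧ Dseg i u.length = u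

/-- u is a factor of the period-doubling sequence D. -/
def FactorD (u : List Letter) : Prop := ∃ i, DOccursAt u i

/-- L(u,p): the starting position of the p-th occurrence (p ≥ 1) of u in D. -/
noncomputable def L (u : List Letter) (p : ℕ) : ℕ := Nat.nth (DOccursAt u) (p - 1)

/-- r_p(u): the p-th return word of u (p ≥ 1), i.e. D[L(u,p) .. L(u,p+1)−1];
r_0(u) is the prefix of D preceding the first occurrence of u. -/
noncomputable def r (u : List Letter) (p : ℕ) : List Letter :=
  if p = 0 then Dseg 1 (L u 1 - 1) else Dseg (L u p) (L u (p + 1) - L u p)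

/-- The morphism τ₁ : a ↦ a, b ↦ bb, extended to words. -/
def tau1 : List Letter → List Letter :=
  fun w => w.flatMap fun x => match x with
    | .a => [.a]
    | .b => [.b, .b]
    | .c => [.c]

/-- The morphism τ₂ : a ↦ ab, b ↦ acac, extended to words. -/
def tau2 : List Letter → List Letter :=
  fun w => w.flatMap fun x => match x with
    | .a => [.a, .b]
    | .b => [.a, .c, .a, .c]
    | .c => [.c]

/-- Θ₁[p], the p-th letter (p ≥ 1) of Θ₁ = τ₁(D): since |τ₁(w)| ≥ |w|, the p-th
letter of Θ₁ is the p-th letter of the image of the length-p prefix of D. -/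
def Theta1 (p : ℕ) : Letter := (tau1 (Dseg 1 p)).getD (p - 1) .a

/-- Θ₂[p], the p-th letter (p ≥ 1) of Θ₂ = τ₂(D). -/
def Theta2 (p : ℕ) : Letter := (tau2 (Dseg 1 p)).getD (p - 1) .a

/-- The envelope word E_{1,m} = A_m with its last letter δ_m deleted. -/
def E1 (m : ℕ) : List Letter := (A m).dropLast

/-- The envelope word E_{2,m} = B_m B_{m−1} with its last letter δ_m deleted. -/
def E2 (m : ℕ) : List Letter := (B m ++ B (m - 1)).dropLast

/-- Enumeration of the envelope words in the order
E_{1,1} ⊏ E_{2,1} ⊏ E_{1,2} ⊏ E_{2,2} ⊏ …. -/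
def Eword (k : ℕ) : List Letter := if k % 2 = 0 then E1 (k / 2 + 1) else E2 (k / 2 + 1)

/-- Env(u): the ⊏-least envelope word having u as a factor. -/
noncomputable def Env (u : List Letter) : List Letter :=
  Eword (sInf {k | IsFactor u (Eword k)})

/-- The letterwise complement exchanging a and b. -/
def comp : Letter → Letter
  | .a => .b
  | .b => .a
  | .c => .c

def F (i : ℕ) : Letter := if padicValNat 2 i % 2 = 0 then .a else .b

lemma F_odd {x : ℕ} (h : x % 2 = 1) : F x = .a := by
  have : padicValNat 2 x = 0 := padicValNat.eq_zero_of_not_dvd (by omega)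
  simp [F, this]

lemma val2_double {x : ℕ} (h : x ≠ 0) : padicValNat 2 (2*x) = padicValNat 2 x + 1 := by
  rw [padicValNat.mul (by norm_num) h, padicValNat.self (by norm_num)]; ring

lemma F_double {x : ℕ} (h : x ≠ 0) : F (2*x) = comp (F x) := by
  unfold F
  rw [val2_double h]
  rcases Nat.mod_two_eq_zero_or_one (padicValNat 2 x) with h0 | h1
  · rw [if_pos h0, if_neg (by omega)]; rfl
  · rw [if_pos (by omega), if_neg (by omega)]; rfl

lemma comp_inj {x y : Letter} (h : comp x = comp y) : x = y := by
  cases x <;> cases y <;> simp_all [comp]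

lemma val2_sub_pow : ∀ i, ∀ m : ℕ, 0 < i → i < 2^m →
    padicValNat 2 (2^m - i) = padicValNat 2 i := by
  intro i
  induction i using Nat.strong_induction_on with
  | _ i ih =>
    intro m h1 h2
    rcases Nat.even_or_odd i with ⟨j, hj⟩ | ho
    · -- i = 2j even
      have hm2 : 2 ≤ m := by
        by_contra h
        interval_cases m <;> omega
      obtain ⟨m', rfl⟩ : ∃ m', m = m' + 1 := ⟨m - 1, by omega⟩
      have hpow : 2^(m'+1) = 2 * 2^m' := by ring
      have hji : i = 2 * j := by omega
      have hjlt : j < 2^m' := by omega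
      have hjpos : 0 < j := by omega
      have hsub : 2^(m'+1) - i = 2 * (2^m' - j) := by omega
      rw [hsub, hji, val2_double (by omega), val2_double (by omega),
        ih j (by omega) m' hjpos hjlt]
    · -- i odd
      have hm1 : 1 ≤ m := by
        by_contra h
        interval_cases m <;> omega
      have hpe : 2^m % 2 = 0 := by
        obtain ⟨m', rfl⟩ : ∃ m', m = m' + 1 := ⟨m - 1, by omega⟩
        have : 2^(m'+1) = 2 * 2^m' := by ring
        omega
      rcases ho with ⟨k, hk⟩
      have h1' : (2^m - i) % 2 = 1 := by omega
      rw [padicValNat.eq_zero_of_not_dvd (by omega),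
        padicValNat.eq_zero_of_not_dvd (by omega)]

lemma F_sub_pow {i m : ℕ} (h1 : 0 < i) (h2 : i < 2^m) : F (2^m - i) = F i := by
  unfold F; rw [val2_sub_pow i m h1 h2]

/-- If F is "palindromic around M", M is a power of 2. -/
lemma pow_of_pal : ∀ M : ℕ, 1 ≤ M → (∀ i, 0 < i → i < M → F i = F (M - i)) →
    ∃ n, M = 2^n := by
  intro M
  induction M using Nat.strong_induction_on with
  | _ M ih =>
    intro hM h
    rcases Nat.lt_or_ge M 2 with h2 | h2
    · exact ⟨0, by omega⟩
    rcases Nat.even_or_odd M with ⟨K, hK⟩ | ho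
    · -- M even
      have hMK : M = 2 * K := by omega
      have hK1 : 1 ≤ K := by omega
      obtain ⟨n, hn⟩ := ih K (by omega) hK1 (by
        intro j hj0 hjK
        have := h (2*j) (by omega) (by omega)
        rw [show M - 2*j = 2*(K - j) by omega, F_double (by omega),
          F_double (by omega)] at this
        exact comp_inj this)
      exact ⟨n+1, by rw [hMK, hn]; ring⟩
    · -- M odd, M ≥ 3
      exfalso
      rcases ho with ⟨k, hk⟩
      have h3 : 3 ≤ M := by omega
      have hv : padicValNat 2 2 = 1 := padicValNat.self (by norm_num)
      have h2' := h 2 (by omega) (by omega)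
      rw [F_odd (x := M - 2) (by omega)] at h2'
      simp [F, hv] at h2'

lemma sigmaw_append (u v : List Letter) : sigmaw (u ++ v) = sigmaw u ++ sigmaw v := by
  simp [sigmaw]

lemma sigmaw_single (x : ℕ) (hx : x ≠ 0) : sigmaw [F x] = [F (2*x - 1), F (2*x)] := by
  have h1 : F (2*x - 1) = .a := F_odd (by omega)
  have h2 : F (2*x) = comp (F x) := F_double hx
  unfold F at *
  rcases Nat.mod_two_eq_zero_or_one (padicValNat 2 x) with h0 | h0 <;>
    simp_all [sigmaw, comp]

lemma sigmaw_map_range (n : ℕ) :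
    sigmaw ((List.range n).map (fun k => F (k+1))) =
      (List.range (2*n)).map (fun k => F (k+1)) := by
  induction n with
  | zero => simp [sigmaw]
  | succ n ih =>
    rw [List.range_succ, List.map_append, sigmaw_append, ih,
      show 2*(n+1) = (2*n+1)+1 by ring, List.range_succ, List.range_succ]
    simp only [List.map_append, List.append_assoc]
    congr 1
    rw [List.map_singleton, List.map_singleton, List.map_singleton,
      sigmaw_single (n+1) (by omega)]
    simp only [List.singleton_append]
    congr 2 <;> congr 1 <;> omega

lemma A_repr (m : ℕ) : A m = (List.range (2^m)).map (fun k => F (k+1)) := by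
  induction m with
  | zero =>
    have : F 1 = .a := F_odd (by omega)
    show A 0 = List.map (fun k => F (k+1)) [0]
    simp [A, this]
  | succ m ih =>
    have : A (m+1) = sigmaw (A m) := Function.iterate_succ_apply' sigmaw m [.a]
    rw [this, ih, sigmaw_map_range, show 2^(m+1) = 2*2^m by ring]

lemma E1_repr (m : ℕ) : E1 m = (List.range (2^m - 1)).map (fun k => F (k+1)) := by
  rw [E1, A_repr, ← List.map_dropLast]
  congr 1
  rw [List.dropLast_eq_take, List.take_range]
  congr 1
  simp

lemma E1_length (m : ℕ) : (E1 m).length = 2^m - 1 := by simp [E1_repr]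

lemma E1_getElem (m k : ℕ) (h : k < 2^m - 1) :
    (E1 m)[k]'(by rw [E1_length]; exact h) = F (k+1) := by
  simp [E1_repr]

lemma E1_reverse (m : ℕ) : (E1 m).reverse = E1 m := by
  apply List.ext_getElem (by simp)
  intro k h1 h2
  rw [List.getElem_reverse]
  rw [E1_length] at h2
  have hlr : (E1 m).length - 1 - k < 2^m - 1 := by rw [E1_length]; omega
  rw [E1_getElem m _ hlr, E1_getElem m k h2, E1_length]
  have h2m : (1:ℕ) ≤ 2^m := Nat.one_le_two_pow
  rw [show 2^m - 1 - 1 - k + 1 = 2^m - (k+1) by omega]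
  exact F_sub_pow (by omega) (by omega)


/-- For every m ≥ 1, every nonempty palindromic prefix (resp. suffix)
of E_{1,m} equals E_{1,n} for some 1 ≤ n ≤ m. -/
theorem palindromic_prefix_suffix_E1 (m : ℕ) (hm : 1 ≤ m) (w : List Letter)
    (hne : w ≠ []) (hpal : w.reverse = w) :
    (w <+: E1 m → ∃ n, 1 ≤ n ∧ n ≤ m ∧ w = E1 n) ∧
    (w <:+ E1 m → ∃ n, 1 ≤ n ∧ n ≤ m ∧ w = E1 n) := by
  have main : w <+: E1 m → ∃ n, 1 ≤ n ∧ n ≤ m ∧ w = E1 n := by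
    intro hp
    set Len := w.length with hLdef
    have hL1 : 1 ≤ Len := List.length_pos_iff.mpr hne
    have hlen : Len ≤ 2^m - 1 := by
      have := hp.length_le; rwa [E1_length] at this
    have h2m : (1:ℕ) ≤ 2^m := Nat.one_le_two_pow
    have hget : ∀ k, (hk : k < Len) → w[k] = F (k+1) := by
      intro k hk
      have hk2 : k < 2^m - 1 := by omega
      have h1 : w[k]'hk = (E1 m)[k]'(by rw [E1_length]; omega) :=
        hp.getElem hk
      rw [h1, E1_getElem m k hk2]
    have hsym : ∀ k, (hk : k < Len) → w[k] = w[Len - 1 - k]'(by omega) := by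
      intro k hk
      have h1 : w.reverse[k]'(by simpa using hk) = w[k]'hk := by
        simp only [hpal]
      rw [← h1, List.getElem_reverse]
    have key : ∀ i, 0 < i → i < Len + 1 → F i = F (Len + 1 - i) := by
      intro i hi0 hi1
      have h1 : i - 1 < Len := by omega
      have h2 : Len + 1 - i - 1 < Len := by omega
      have e1 := hget (i-1) h1
      rw [show i-1+1 = i by omega] at e1
      have e2 := hget (Len+1-i-1) h2
      rw [show Len+1-i-1+1 = Len+1-i by omega] at e2
      rw [← e1, ← e2]
      have h3 := hsym (i-1) h1
      have hidx : Len + 1 - i - 1 = Len - 1 - (i - 1) := by omega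
      exact h3.trans (by simp only [hidx])
    obtain ⟨n, hn⟩ := pow_of_pal (Len + 1) (by omega) key
    have hn1 : 1 ≤ n := by
      by_contra h
      have : n = 0 := by omega
      rw [this] at hn; simp at hn; omega
    have hnm : n ≤ m := by
      have : 2^n ≤ 2^m := by omega
      exact (Nat.pow_le_pow_iff_right (by norm_num)).mp this
    refine ⟨n, hn1, hnm, ?_⟩
    apply List.ext_getElem (by rw [E1_length]; omega)
    intro k h1 h2
    rw [E1_getElem n k (by rw [E1_length] at h2; exact h2), hget k h1]
  refine ⟨main, fun hs => ?_⟩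
  apply main
  have : w.reverse <+: (E1 m).reverse := List.reverse_prefix.mpr hs
  rwa [hpal, E1_reverse] at this
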